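/- arXiv:1710.03114 — 3 statements merged into one kernel-verified Lean document; each statement's English description precedes it below -/
import Mathlib

section
/- Let ∑_{k} a_k(z−z₀)^k be a power series whose coefficients satisfy limsup_k |a_k|^{1/k} ≤ 1/R for some R > 0, and let ρ ≥ 1. Then limsup_{n→∞} ( max_{|z−z₀| ≤ ρR} |S_n(z)| )^{1/n} ≤ ρ, where S_n(z) = ∑_{k=0}^{n} a_k (z−z₀)^k. -/
open Filter Metric

/-- The `n`-th partial sum of the power series `∑ a_k (z - z₀)^k`. -/
noncomputable def S (a : ℕ → ℂ) (z₀ : ℂ) (n : ℕ) (z : ℂ) : ℂ :=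
  ∑ k ∈ Finset.range (n + 1), a k * (z - z₀) ^ k

/-!
Put `r = ρR` and let `M_n` be the maximum of `‖S_n‖` on the closed disc of radius `r`.
Cauchy's estimate for the polynomial `S_n` gives `‖a_n‖ rⁿ ≤ M_n`, so if `M_n^{1/n}` is bounded
then so is `‖a_k‖^{1/k}`, and the hypothesis on its limsup says that for every `q > ρ`
eventually `‖a_k‖ rᵏ ≤ qᵏ`. Then `M_n ≤ ∑_{k ≤ n} ‖a_k‖ rᵏ ≤ C + (n + 1) qⁿ`, which is
eventually below `bⁿ` for every `b > q`. If `M_n^{1/n}` is unbounded, its limsup in `ℝ` is `0`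
by convention.
-/

open Finset Topology
open scoped Nat

lemma eventually_add_mul_pow_le_pow (C : ℝ) {q s : ℝ} (hq : 0 ≤ q) (hs : 1 < s)
    (hqs : q < s) : ∀ᶠ n : ℕ in atTop, C + (n + 1) * q ^ n ≤ s ^ n := by
  have hs0 : 0 < s := one_pos.trans hs
  have hqs' : |q / s| < 1 := by
    rw [abs_of_nonneg (by positivity)]
    exact (div_lt_one hs0).2 hqs
  have hlim : Tendsto (fun n : ℕ => C * s⁻¹ ^ n + ((n : ℝ) * (q / s) ^ n + (q / s) ^ n))
      atTop (𝓝 (C * 0 + (0 + 0))) :=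
    ((tendsto_pow_atTop_nhds_zero_of_lt_one (by positivity)
        (inv_lt_one_of_one_lt₀ hs)).const_mul C).add
      ((tendsto_self_mul_const_pow_of_abs_lt_one hqs').add
        (tendsto_pow_atTop_nhds_zero_of_abs_lt_one hqs'))
  simp only [mul_zero, add_zero] at hlim
  filter_upwards [hlim.eventually (gt_mem_nhds zero_lt_one)] with n hn
  calc C + (n + 1) * q ^ n
      = (C * s⁻¹ ^ n + ((n : ℝ) * (q / s) ^ n + (q / s) ^ n)) * s ^ n := by
        rw [div_pow, inv_pow]
        field_simp
    _ ≤ 1 * s ^ n := by gcongr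
    _ = s ^ n := one_mul _

lemma eventually_sum_range_le_pow {b : ℕ → ℝ} {q s : ℝ} (hq : 1 ≤ q) (hqs : q < s)
    (hb : ∀ᶠ k in atTop, b k ≤ q ^ k) :
    ∀ᶠ n in atTop, ∑ k ∈ range (n + 1), b k ≤ s ^ n := by
  obtain ⟨N, hN⟩ := eventually_atTop.1 hb
  filter_upwards [eventually_ge_atTop N,
    eventually_add_mul_pow_le_pow (∑ k ∈ range N, b k) (by linarith) (by linarith) hqs]
    with n hn hgrowth
  refine le_trans ?_ hgrowth
  rw [← sum_range_add_sum_Ico _ (by omega : N ≤ n + 1)]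
  gcongr
  calc ∑ k ∈ Ico N (n + 1), b k
      ≤ ∑ _k ∈ Ico N (n + 1), q ^ n :=
        sum_le_sum fun k hk => (hN k (mem_Ico.1 hk).1).trans
          (pow_le_pow_right₀ hq (by have := (mem_Ico.1 hk).2; omega))
    _ ≤ (n + 1) * q ^ n := by
        rw [sum_const, Nat.card_Ico, nsmul_eq_mul]
        gcongr
        exact_mod_cast Nat.sub_le _ _

lemma eventually_le_pow_of_limsup_rpow_lt {x : ℕ → ℝ} {t : ℝ} (hx : ∀ k, 0 ≤ x k)
    (hbdd : IsBoundedUnder (· ≤ ·) atTop fun k => x k ^ (1 / (k : ℝ)))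
    (ht : limsup (fun k => x k ^ (1 / (k : ℝ))) atTop < t) :
    ∀ᶠ k in atTop, x k ≤ t ^ k := by
  filter_upwards [eventually_lt_of_limsup_lt ht hbdd, eventually_ne_atTop 0] with k hk hk0
  have ht0 : 0 ≤ t := (Real.rpow_nonneg (hx k) _).trans hk.le
  rw [one_div, Real.rpow_inv_lt_iff_of_pos (hx k) ht0 (by positivity)] at hk
  exact_mod_cast hk.le

lemma limsup_rpow_one_div_le {u : ℕ → ℝ} {L : ℝ} (hu : ∀ n, 0 ≤ u n) (hL : 0 ≤ L)
    (h : ∀ b > L, ∀ᶠ n in atTop, u n ≤ b ^ n) :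
    limsup (fun n => u n ^ (1 / (n : ℝ))) atTop ≤ L := by
  refine le_of_forall_gt_imp_ge_of_dense fun b hb =>
    limsup_le_of_le (isCoboundedUnder_le_of_le atTop fun n => Real.rpow_nonneg (hu n) _) ?_
  filter_upwards [h b hb, eventually_ne_atTop 0] with n hn hn0
  rw [one_div, Real.rpow_inv_le_iff_of_pos (hu n) (hL.trans hb.le) (by positivity)]
  exact_mod_cast hn

lemma norm_le_sSup_image_closedBall {E F : Type*} [PseudoMetricSpace E] [ProperSpace E]
    [SeminormedAddCommGroup F] {f : E → F} {c z : E} {r : ℝ}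
    (hf : ContinuousOn f (closedBall c r)) (hz : z ∈ closedBall c r) :
    ‖f z‖ ≤ sSup ((fun z => ‖f z‖) '' closedBall c r) :=
  le_csSup ((isCompact_closedBall c r).bddAbove_image hf.norm) (Set.mem_image_of_mem _ hz)

lemma differentiable_S (a : ℕ → ℂ) (z₀ : ℂ) (n : ℕ) : Differentiable ℂ (S a z₀ n) := by
  unfold S
  fun_prop

lemma iteratedDeriv_S_center (a : ℕ → ℂ) (z₀ : ℂ) {k n : ℕ} (hk : k ≤ n) :
    iteratedDeriv k (S a z₀ n) z₀ = k ! * a k := by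
  set P : ℂ → ℂ := fun w => ∑ j ∈ range (n + 1), a j * w ^ j with hP
  have hS : S a z₀ n = fun z => P (z - z₀) := rfl
  rw [hS, iteratedDeriv_comp_sub_const]
  beta_reduce
  rw [sub_self, hP, iteratedDeriv_fun_sum fun j _ => by fun_prop]
  simp only [iteratedDeriv_const_mul_field, iteratedDeriv_fun_pow_zero, Nat.cast_ite,
    Nat.cast_zero, mul_ite, mul_zero]
  rw [sum_ite_eq, if_pos (mem_range_succ_iff.2 hk), mul_comm]

lemma norm_coeff_mul_pow_le (a : ℕ → ℂ) (z₀ : ℂ) {k n : ℕ} (hk : k ≤ n) {r M : ℝ}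
    (hr : 0 < r) (hM : ∀ z ∈ sphere z₀ r, ‖S a z₀ n z‖ ≤ M) : ‖a k‖ * r ^ k ≤ M := by
  have h := Complex.norm_iteratedDeriv_le_of_forall_mem_sphere_norm_le k hr
    (differentiable_S a z₀ n).diffContOnCl hM
  rw [iteratedDeriv_S_center a z₀ hk, norm_mul, Complex.norm_natCast,
    le_div_iff₀ (by positivity), mul_assoc] at h
  exact le_of_mul_le_mul_left h (by positivity)

lemma norm_S_le (a : ℕ → ℂ) (z₀ : ℂ) (n : ℕ) {r : ℝ} {z : ℂ} (hz : z ∈ closedBall z₀ r) :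
    ‖S a z₀ n z‖ ≤ ∑ k ∈ range (n + 1), ‖a k‖ * r ^ k := by
  refine (norm_sum_le _ _).trans (sum_le_sum fun k _ => ?_)
  rw [norm_mul, norm_pow]
  gcongr
  rwa [mem_closedBall, dist_eq_norm] at hz

lemma norm_coeff_rpow_mul_le_rpow_sSup (a : ℕ → ℂ) (z₀ : ℂ) {n : ℕ} (hn : n ≠ 0) {r : ℝ}
    (hr : 0 < r) :
    ‖a n‖ ^ (1 / (n : ℝ)) * r ≤
      sSup ((fun z => ‖S a z₀ n z‖) '' closedBall z₀ r) ^ (1 / (n : ℝ)) := by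
  have hcauchy := norm_coeff_mul_pow_le a z₀ le_rfl hr fun z hz =>
    norm_le_sSup_image_closedBall (differentiable_S a z₀ n).continuous.continuousOn
      (sphere_subset_closedBall hz)
  calc ‖a n‖ ^ (1 / (n : ℝ)) * r = (‖a n‖ * r ^ n) ^ (1 / (n : ℝ)) := by
        rw [Real.mul_rpow (norm_nonneg _) (by positivity), one_div,
          Real.pow_rpow_inv_natCast hr.le hn]
    _ ≤ _ := by gcongr

theorem limsup_sup_partial_sums_le (a : ℕ → ℂ) (z₀ : ℂ) (R : ℝ) (hR : 0 < R)
    (hcoef : Filter.limsup (fun k : ℕ => ‖a k‖ ^ (1 / (k : ℝ))) Filter.atTop ≤ 1 / R)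
    (ρ : ℝ) (hρ : 1 ≤ ρ) :
    Filter.limsup
      (fun n : ℕ =>
        (sSup ((fun z => ‖S a z₀ n z‖) '' closedBall z₀ (ρ * R))) ^ (1 / (n : ℝ)))
      Filter.atTop ≤ ρ := by
  set r := ρ * R
  have hr : 0 < r := by positivity
  set M : ℕ → ℝ := fun n => sSup ((fun z => ‖S a z₀ n z‖) '' closedBall z₀ r)
  have hM : ∀ n, 0 ≤ M n := fun n =>
    Real.sSup_nonneg (Set.forall_mem_image.2 fun _ _ => norm_nonneg _)
  by_cases hbdd : IsBoundedUnder (· ≤ ·) atTop fun n => M n ^ (1 / (n : ℝ))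
  swap
  · rw [Real.limsup_of_not_isBoundedUnder hbdd]
    linarith
  have hcoef_bdd : IsBoundedUnder (· ≤ ·) atTop fun k => ‖a k‖ ^ (1 / (k : ℝ)) := by
    obtain ⟨B, hB⟩ := hbdd
    refine ⟨B / r, eventually_map.2 ?_⟩
    filter_upwards [eventually_map.1 hB, eventually_ne_atTop 0] with n hn hn0
    exact (le_div_iff₀ hr).2 ((norm_coeff_rpow_mul_le_rpow_sSup a z₀ hn0 hr).trans hn)
  refine limsup_rpow_one_div_le hM (by linarith) fun b hb => ?_
  obtain ⟨q, hρq, hqb⟩ := exists_between hb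
  have hcoef_lt : limsup (fun k => ‖a k‖ ^ (1 / (k : ℝ))) atTop < q / r :=
    hcoef.trans_lt (by rw [div_lt_div_iff₀ hR hr]; nlinarith)
  have htail : ∀ᶠ k in atTop, ‖a k‖ * r ^ k ≤ q ^ k := by
    filter_upwards [eventually_le_pow_of_limsup_rpow_lt (fun _ => norm_nonneg _) hcoef_bdd
      hcoef_lt] with k hk
    calc ‖a k‖ * r ^ k ≤ (q / r) ^ k * r ^ k := by gcongr
      _ = q ^ k := by rw [div_pow, div_mul_cancel₀ _ (by positivity)]
  filter_upwards [eventually_sum_range_le_pow (hρ.trans hρq.le) hqb htail] with n hn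
  exact Real.sSup_le (Set.forall_mem_image.2 fun z hz => (norm_S_le a z₀ n hz).trans hn)
    (pow_nonneg (by linarith) n)
end

section
/- Let ∑_k a_k(z−z₀)^k be a power series with radius of convergence exactly R ∈ (0,∞), ρ ≥ 1, and suppose limsup_{n→∞} ( max_{|z−z₀| ≤ ρR} |S_n(z)| )^{1/n} < ρ, where S_n is the n-th partial sum. Then a contradiction follows; equivalently, limsup_{n→∞} ( max_{|z−z₀| ≤ ρR} |S_n(z)| )^{1/n} ≥ ρ. -/
/-!
Since `a n` is the `n`-th Taylor coefficient of the polynomial `S a z₀ n`, Cauchy's estimate on the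
circle of radius `r = ρ R` gives `‖a n‖ rⁿ ≤ Mₙ`, where `Mₙ` is the maximum of `‖S a z₀ n‖` on the
closed disc; hence `r ‖a n‖^(1/n) ≤ Mₙ^(1/n)` and `ρ = r / R ≤ limsup Mₙ^(1/n)`.
A real `limsup` of a sequence that is unbounded above is `0`, so one also needs `Mₙ^(1/n)` to be
bounded: the finite `limsup` of `‖a k‖^(1/k)` gives `‖a k‖ ≤ Cᵏ` eventually, hence `Mₙ ≤ Kⁿ`.
-/

open Filter Metric

open Complex Real

theorem norm_le_sSup_image_norm {X E : Type*} [TopologicalSpace X] [NormedAddCommGroup E]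
    {f : X → E} {s : Set X} (hs : IsCompact s) (hf : ContinuousOn f s) {x : X} (hx : x ∈ s) :
    ‖f x‖ ≤ sSup ((fun x => ‖f x‖) '' s) :=
  le_csSup (hs.image_of_continuousOn hf.norm).bddAbove ⟨x, hx, rfl⟩

theorem rpow_one_div_le_iff_le_pow {x y : ℝ} {n : ℕ} (hx : 0 ≤ x) (hy : 0 ≤ y) (hn : n ≠ 0) :
    x ^ (1 / (n : ℝ)) ≤ y ↔ x ≤ y ^ n := by
  rw [one_div, Real.rpow_inv_le_iff_of_pos hx hy (by positivity), Real.rpow_natCast]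

theorem le_rpow_one_div_iff_pow_le {x y : ℝ} {n : ℕ} (hx : 0 ≤ x) (hy : 0 ≤ y) (hn : n ≠ 0) :
    x ≤ y ^ (1 / (n : ℝ)) ↔ x ^ n ≤ y := by
  rw [one_div, Real.le_rpow_inv_iff_of_pos hx hy (by positivity), Real.rpow_natCast]

theorem Filter.mul_limsup_le_limsup {ι : Type*} {f : Filter ι} {u v : ι → ℝ} {r : ℝ}
    (hr : 0 < r) (hv : IsCoboundedUnder (· ≤ ·) f v) (hu : IsBoundedUnder (· ≤ ·) f u)
    (h : ∀ᶠ i in f, r * v i ≤ u i) : r * limsup v f ≤ limsup u f := by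
  refine le_of_forall_lt_imp_le_of_dense fun c hc => le_limsup_of_frequently_le ?_ hu
  have hcr : c / r < limsup v f := by rwa [div_lt_iff₀' hr]
  exact ((frequently_lt_of_lt_limsup hv hcr).and_eventually h).mono fun i hi =>
    ((div_lt_iff₀' hr).1 hi.1).le.trans hi.2

theorem exists_eventually_le_pow_of_isBoundedUnder {w : ℕ → ℝ} (hw : ∀ k, 0 ≤ w k)
    (h : IsBoundedUnder (· ≤ ·) atTop fun k => w k ^ (1 / (k : ℝ))) :
    ∃ C, 0 ≤ C ∧ ∀ᶠ k in atTop, w k ≤ C ^ k := by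
  obtain ⟨C, hC⟩ := h.eventually_le
  refine ⟨max C 0, le_max_right _ _, ?_⟩
  filter_upwards [hC, eventually_ne_atTop 0] with k hk hk0
  exact (rpow_one_div_le_iff_le_pow (hw k) (le_max_right _ _) hk0).1 (hk.trans (le_max_left _ _))

theorem exists_sum_range_le_pow {w : ℕ → ℝ} (hw : ∀ k, 0 ≤ w k) {q : ℝ} (hq : 0 ≤ q)
    (h : ∀ᶠ k in atTop, w k ≤ q ^ k) :
    ∃ K, 0 ≤ K ∧ ∀ n ≠ 0, ∑ k ∈ Finset.range (n + 1), w k ≤ K ^ n := by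
  obtain ⟨D, hD, hqD⟩ : ∃ D : ℝ, 1 ≤ D ∧ q < D := ⟨q + 1, by linarith, by linarith⟩
  have hsum : Summable fun k => w k / D ^ k := by
    refine Summable.of_norm_bounded_eventually_nat (summable_geometric_of_lt_one
      (div_nonneg hq (by positivity)) ((div_lt_one (by positivity)).2 hqD)) ?_
    filter_upwards [h] with k hk
    rw [Real.norm_of_nonneg (div_nonneg (hw k) (by positivity)), div_pow]
    exact div_le_div_of_nonneg_right hk (by positivity)
  set B := ∑' k, w k / D ^ k
  have hB : 0 ≤ B := tsum_nonneg fun k => div_nonneg (hw k) (by positivity)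
  refine ⟨max B 1 * D, by positivity, fun n hn => ?_⟩
  calc ∑ k ∈ Finset.range (n + 1), w k
      = ∑ k ∈ Finset.range (n + 1), w k / D ^ k * D ^ k :=
        Finset.sum_congr rfl fun k _ => (div_mul_cancel₀ _ (by positivity)).symm
    _ ≤ ∑ k ∈ Finset.range (n + 1), w k / D ^ k * D ^ n := by
        refine Finset.sum_le_sum fun k hk => mul_le_mul_of_nonneg_left ?_ ?_
        · exact pow_le_pow_right₀ hD (Finset.mem_range_succ_iff.1 hk)
        · exact div_nonneg (hw k) (by positivity)
    _ ≤ B * D ^ n := by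
        rw [← Finset.sum_mul]
        gcongr
        exact hsum.sum_le_tsum _ fun k _ => div_nonneg (hw k) (by positivity)
    _ ≤ max B 1 ^ n * D ^ n := by
        gcongr
        exact (le_max_left _ _).trans (le_self_pow₀ (le_max_right _ _) hn)
    _ = (max B 1 * D) ^ n := (mul_pow _ _ _).symm

theorem continuous_S (a : ℕ → ℂ) (z₀ : ℂ) (n : ℕ) : Continuous (S a z₀ n) := by
  unfold S
  fun_prop

theorem circleIntegral_sub_zpow_mul_S (a : ℕ → ℂ) (z₀ : ℂ) (n : ℕ) {r : ℝ} (hr : 0 < r) :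
    ∮ z in C(z₀, r), (z - z₀) ^ (-(n + 1 : ℤ)) * S a z₀ n z = 2 * π * I * a n := by
  have hint : ∀ k : ℕ, CircleIntegrable (fun z => a k * (z - z₀) ^ ((k : ℤ) - (n + 1))) z₀ r :=
    fun k => (circleIntegrable_sub_zpow_iff.2 (by simp [hr.ne, abs_of_pos hr])).const_smul
  calc ∮ z in C(z₀, r), (z - z₀) ^ (-(n + 1 : ℤ)) * S a z₀ n z
      = ∮ z in C(z₀, r), ∑ k ∈ Finset.range (n + 1), a k * (z - z₀) ^ ((k : ℤ) - (n + 1)) := by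
        refine circleIntegral.integral_congr hr.le fun z hz => ?_
        have hz₀ : z - z₀ ≠ 0 := sub_ne_zero.2 (ne_of_mem_sphere hz hr.ne')
        simp only [S, Finset.mul_sum, zpow_sub₀ hz₀, zpow_natCast, zpow_neg]
        refine Finset.sum_congr rfl fun k _ => ?_
        ring
    _ = ∑ k ∈ Finset.range (n + 1), a k * ∮ z in C(z₀, r), (z - z₀) ^ ((k : ℤ) - (n + 1)) := by
        simp only [circleIntegral.integral_fun_sum fun k _ => hint k,
          circleIntegral.integral_const_mul]
    _ = 2 * π * I * a n := by
        rw [Finset.sum_eq_single_of_mem n (Finset.self_mem_range_succ n)]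
        · simp [circleIntegral.integral_sub_center_inv z₀ hr.ne', mul_comm]
        · intro k hk hkn
          rw [circleIntegral.integral_sub_zpow_of_ne, mul_zero]
          omega

theorem norm_mul_pow_le_sSup_norm_S (a : ℕ → ℂ) (z₀ : ℂ) (n : ℕ) {r : ℝ} (hr : 0 < r) :
    ‖a n‖ * r ^ n ≤ sSup ((fun z => ‖S a z₀ n z‖) '' closedBall z₀ r) := by
  set M := sSup ((fun z => ‖S a z₀ n z‖) '' closedBall z₀ r)
  have hbound :
      ∀ z ∈ sphere z₀ r, ‖(z - z₀) ^ (-(n + 1 : ℤ)) * S a z₀ n z‖ ≤ M / r ^ (n + 1) := by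
    intro z hz
    rw [norm_mul, norm_zpow, mem_sphere_iff_norm.1 hz, zpow_neg, ← Nat.cast_succ, zpow_natCast,
      inv_mul_eq_div]
    gcongr
    exact norm_le_sSup_image_norm (isCompact_closedBall z₀ r) (continuous_S a z₀ n).continuousOn
      (sphere_subset_closedBall hz)
  have h := circleIntegral.norm_integral_le_of_norm_le_const hr.le hbound
  rw [circleIntegral_sub_zpow_mul_S a z₀ n hr, norm_mul, norm_mul, norm_mul, Complex.norm_I,
    Complex.norm_two, Complex.norm_real, Real.norm_of_nonneg pi_pos.le, mul_one] at h
  have hr_pow : r * (M / r ^ (n + 1)) = M / r ^ n := by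
    rw [pow_succ]
    field_simp
  rwa [mul_assoc (2 * π) r, hr_pow, mul_le_mul_iff_right₀ (by positivity),
    le_div_iff₀ (by positivity)] at h

theorem sSup_norm_S_le (a : ℕ → ℂ) (z₀ : ℂ) (n : ℕ) {r : ℝ} (hr : 0 ≤ r) :
    sSup ((fun z => ‖S a z₀ n z‖) '' closedBall z₀ r) ≤
      ∑ k ∈ Finset.range (n + 1), ‖a k‖ * r ^ k := by
  refine Real.sSup_le ?_ (Finset.sum_nonneg fun k _ => by positivity)
  rintro _ ⟨z, hz, rfl⟩
  refine (norm_sum_le _ _).trans (Finset.sum_le_sum fun k _ => ?_)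
  rw [norm_mul, norm_pow]
  gcongr
  exact mem_closedBall_iff_norm.1 hz

theorem mul_norm_rpow_le_sSup_norm_S_rpow (a : ℕ → ℂ) (z₀ : ℂ) {n : ℕ} (hn : n ≠ 0) {r : ℝ}
    (hr : 0 < r) :
    r * ‖a n‖ ^ (1 / (n : ℝ)) ≤
      sSup ((fun z => ‖S a z₀ n z‖) '' closedBall z₀ r) ^ (1 / (n : ℝ)) := by
  have hcauchy := norm_mul_pow_le_sSup_norm_S a z₀ n hr
  rw [le_rpow_one_div_iff_pow_le (by positivity) ((by positivity : (0 : ℝ) ≤ _).trans hcauchy) hn,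
    mul_pow, one_div, Real.rpow_inv_natCast_pow (norm_nonneg _) hn, mul_comm]
  exact hcauchy

theorem isBoundedUnder_sSup_norm_S_rpow (a : ℕ → ℂ) (z₀ : ℂ) {r : ℝ} (hr : 0 ≤ r)
    (ha : IsBoundedUnder (· ≤ ·) atTop fun k => ‖a k‖ ^ (1 / (k : ℝ))) :
    IsBoundedUnder (· ≤ ·) atTop fun n =>
      sSup ((fun z => ‖S a z₀ n z‖) '' closedBall z₀ r) ^ (1 / (n : ℝ)) := by
  obtain ⟨C, hC, hCa⟩ :=
    exists_eventually_le_pow_of_isBoundedUnder (fun k => norm_nonneg (a k)) ha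
  obtain ⟨K, hK, hKsum⟩ := exists_sum_range_le_pow (w := fun k => ‖a k‖ * r ^ k)
    (fun k => by positivity) (mul_nonneg hC hr)
    (hCa.mono fun k hk => by rw [mul_pow]; gcongr)
  refine isBoundedUnder_of_eventually_le (a := K) ?_
  filter_upwards [eventually_ne_atTop 0] with n hn
  have hM : 0 ≤ sSup ((fun z => ‖S a z₀ n z‖) '' closedBall z₀ r) :=
    Real.sSup_nonneg (by rintro _ ⟨z, -, rfl⟩; positivity)
  exact (rpow_one_div_le_iff_le_pow hM hK hn).2 ((sSup_norm_S_le a z₀ n hr).trans (hKsum n hn))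

theorem limsup_sup_partial_sums_ge (a : ℕ → ℂ) (z₀ : ℂ) (R : ℝ) (hR : 0 < R)
    (hcoef : Filter.limsup (fun k : ℕ => ‖a k‖ ^ (1 / (k : ℝ))) Filter.atTop = 1 / R)
    (ρ : ℝ) (hρ : 1 ≤ ρ) :
    Filter.limsup
      (fun n : ℕ =>
        (sSup ((fun z => ‖S a z₀ n z‖) '' closedBall z₀ (ρ * R))) ^ (1 / (n : ℝ)))
      Filter.atTop ≥ ρ := by
  have hr : 0 < ρ * R := mul_pos (by linarith) hR
  have hcoef_bdd : IsBoundedUnder (· ≤ ·) atTop fun k => ‖a k‖ ^ (1 / (k : ℝ)) := by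
    by_contra h
    rw [Real.limsup_of_not_isBoundedUnder h] at hcoef
    exact (one_div_pos.2 hR).ne hcoef
  have hcoef_cobdd : IsCoboundedUnder (· ≤ ·) atTop fun k => ‖a k‖ ^ (1 / (k : ℝ)) :=
    isCoboundedUnder_le_of_le atTop fun k => Real.rpow_nonneg (norm_nonneg _) _
  have h := mul_limsup_le_limsup hr hcoef_cobdd
    (isBoundedUnder_sSup_norm_S_rpow a z₀ hr.le hcoef_bdd)
    ((eventually_ne_atTop 0).mono fun n hn => mul_norm_rpow_le_sSup_norm_S_rpow a z₀ hn hr)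
  rwa [hcoef, mul_assoc, mul_one_div_cancel hR.ne', mul_one] at h
end

section
/- Let z₀ ∈ ℂ, r > 0 with 0 ∉ D(z₀,r), let D_m = closure of D(z₀, r(1−1/m)) for m ≥ 1, (P_j) an enumeration of polynomials with coefficients in ℚ+iℚ, and log a branch of the logarithm on D(z₀,r). Define A(m,j,s) = ∪_{n≥0} { f ∈ H(D(z₀,r)) : sup_{z∈D_m} |T_n(f)(z) − P_j(log z)| < 1/s } and A = ∩_{m,j,s} A(m,j,s). Then A equals the set S(D(z₀,r)) of f for which {T_N(f) : N ≥ 0} is dense in H(D(z₀,r)). -/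
open Filter Metric

/-- The `N`-th partial sum of the Taylor expansion of `f` with centre `z`, evaluated at `0`. -/
noncomputable def T (N : ℕ) (f : ℂ → ℂ) (z : ℂ) : ℂ :=
  ∑ k ∈ Finset.range (N + 1), iteratedDeriv k f z / (Nat.factorial k : ℂ) * (-z) ^ k

/-- A polynomial has coefficients in `ℚ + iℚ`. -/
def RatCoeff (P : Polynomial ℂ) : Prop :=
  ∀ n, ∃ a b : ℚ, P.coeff n = (a : ℂ) + (b : ℂ) * Complex.I

open Polynomial

/-!
Polynomials in a logarithm `L` with coefficients in `ℚ + iℚ` are dense in `H(D(z₀,r))`: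
approximate `g` on `K` by a Taylor polynomial `Q`, then the entire function `Q ∘ exp` on the
compact set `L(K)` by a polynomial `P` with coefficients in `ℚ + iℚ`; since `exp ∘ L = id`,
`P ∘ L` approximates `g` on `K`. So the countably many targets `P_j ∘ L` on the exhausting
compacts `D_m` already control approximation of every `g` on every compact set.
-/

theorem RatCoeff.add {P Q : ℂ[X]} (hP : RatCoeff P) (hQ : RatCoeff Q) : RatCoeff (P + Q) := by
  intro n
  obtain ⟨a, b, hab⟩ := hP n
  obtain ⟨a', b', hab'⟩ := hQ n
  exact ⟨a + a', b + b', by rw [coeff_add, hab, hab']; push_cast; ring⟩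

theorem ratCoeff_monomial (n : ℕ) (a b : ℚ) :
    RatCoeff (monomial n ((a : ℂ) + (b : ℂ) * Complex.I)) := by
  intro k
  rw [coeff_monomial]
  split_ifs
  · exact ⟨a, b, rfl⟩
  · exact ⟨0, 0, by simp⟩

theorem exists_rat_add_rat_mul_I_near (w : ℂ) {ε : ℝ} (hε : 0 < ε) :
    ∃ a b : ℚ, ‖(a : ℂ) + (b : ℂ) * Complex.I - w‖ < ε := by
  obtain ⟨a, ha⟩ := exists_rat_near w.re (half_pos hε)
  obtain ⟨b, hb⟩ := exists_rat_near w.im (half_pos hε)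
  refine ⟨a, b, (Complex.norm_le_abs_re_add_abs_im _).trans_lt ?_⟩
  have hre : ((a : ℂ) + (b : ℂ) * Complex.I - w).re = a - w.re := by simp
  have him : ((a : ℂ) + (b : ℂ) * Complex.I - w).im = b - w.im := by simp
  rw [hre, him, abs_sub_comm _ w.re, abs_sub_comm _ w.im]
  linarith

theorem exists_ratCoeff_approx_of_norm_le (Q : ℂ[X]) {S : Set ℂ} {M : ℝ}
    (hM : ∀ w ∈ S, ‖w‖ ≤ M) {ε : ℝ} (hε : 0 < ε) :
    ∃ P : ℂ[X], RatCoeff P ∧ ∀ w ∈ S, ‖P.eval w - Q.eval w‖ < ε := by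
  induction Q using Polynomial.induction_on' generalizing ε with
  | add Q₁ Q₂ ih₁ ih₂ =>
    obtain ⟨P₁, hP₁, hP₁Q⟩ := ih₁ (half_pos hε)
    obtain ⟨P₂, hP₂, hP₂Q⟩ := ih₂ (half_pos hε)
    refine ⟨P₁ + P₂, hP₁.add hP₂, fun w hw => ?_⟩
    calc ‖(P₁ + P₂).eval w - (Q₁ + Q₂).eval w‖
        = ‖(P₁.eval w - Q₁.eval w) + (P₂.eval w - Q₂.eval w)‖ := by
          rw [eval_add, eval_add, add_sub_add_comm]
      _ ≤ ‖P₁.eval w - Q₁.eval w‖ + ‖P₂.eval w - Q₂.eval w‖ := norm_add_le _ _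
      _ < ε / 2 + ε / 2 := add_lt_add (hP₁Q w hw) (hP₂Q w hw)
      _ = ε := add_halves ε
  | monomial n c =>
    set B := max M 0 ^ n + 1
    obtain ⟨a, b, hab⟩ := exists_rat_add_rat_mul_I_near c (div_pos hε (by positivity : 0 < B))
    refine ⟨_, ratCoeff_monomial n a b, fun w hw => ?_⟩
    have hwB : ‖w‖ ^ n ≤ B :=
      (pow_le_pow_left₀ (norm_nonneg w) ((hM w hw).trans (le_max_left _ _)) n).trans
        (lt_add_one _).le
    calc ‖(monomial n ((a : ℂ) + b * Complex.I)).eval w - (monomial n c).eval w‖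
        = ‖(a : ℂ) + b * Complex.I - c‖ * ‖w‖ ^ n := by
          rw [eval_monomial, eval_monomial, ← sub_mul, norm_mul, norm_pow]
      _ ≤ ‖(a : ℂ) + b * Complex.I - c‖ * B := by gcongr
      _ < ε / B * B := by gcongr
      _ = ε := div_mul_cancel₀ ε (by positivity)

theorem exists_polynomial_approx_of_differentiableOn_ball {c : ℂ} {R : ℝ} {g : ℂ → ℂ}
    (hg : DifferentiableOn ℂ g (ball c R)) {K : Set ℂ} (hK : IsCompact K)
    (hKs : K ⊆ ball c R) {ε : ℝ} (hε : 0 < ε) :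
    ∃ Q : ℂ[X], ∀ z ∈ K, ‖Q.eval z - g z‖ < ε := by
  rcases K.eq_empty_or_nonempty with rfl | ⟨z, hz⟩
  · exact ⟨0, by simp⟩
  have hR : 0 < R := dist_nonneg.trans_lt (mem_ball.1 (hKs hz))
  obtain ⟨ρ, ⟨hρ, hρR⟩, hKρ⟩ := exists_pos_lt_subset_ball hR hK.isClosed hKs
  obtain ⟨R', hρR', hR'R⟩ := exists_between hρR
  lift R' to NNReal using (hρ.trans hρR').le
  lift ρ to NNReal using hρ.le
  set p := cauchyPowerSeries g c R'
  have hp : HasFPowerSeriesOnBall g p c R' :=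
    (hg.mono (closedBall_subset_ball hR'R)).hasFPowerSeriesOnBall (by exact_mod_cast hρ.trans hρR')
  obtain ⟨n, hn⟩ := ((tendstoUniformlyOn_iff.1
    (hp.tendstoUniformlyOn' (by exact_mod_cast hρR'))) ε hε).exists
  refine ⟨∑ k ∈ Finset.range n, C (p.coeff k) * (X - C c) ^ k, fun z hz => ?_⟩
  have hQ : (∑ k ∈ Finset.range n, C (p.coeff k) * (X - C c) ^ k).eval z =
      p.partialSum n (z - c) := by
    simp only [FormalMultilinearSeries.partialSum, eval_finsetSum,
      FormalMultilinearSeries.apply_eq_pow_smul_coeff, smul_eq_mul]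
    simp [mul_comm]
  rw [hQ, ← dist_eq_norm, dist_comm]
  exact hn z (hKρ hz)

theorem exists_ratCoeff_approx_of_differentiable {F : ℂ → ℂ} (hF : Differentiable ℂ F)
    {S : Set ℂ} (hS : IsCompact S) {ε : ℝ} (hε : 0 < ε) :
    ∃ P : ℂ[X], RatCoeff P ∧ ∀ w ∈ S, ‖P.eval w - F w‖ < ε := by
  obtain ⟨M, hM⟩ := hS.isBounded.exists_norm_le
  have hSM : S ⊆ ball 0 (M + 1) := fun w hw => by
    simpa using (hM w hw).trans_lt (lt_add_one M)
  obtain ⟨Q, hQ⟩ := exists_polynomial_approx_of_differentiableOn_ball hF.differentiableOn hS hSM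
    (half_pos hε)
  obtain ⟨P, hP, hPQ⟩ := exists_ratCoeff_approx_of_norm_le Q hM (half_pos hε)
  refine ⟨P, hP, fun w hw => ?_⟩
  calc ‖P.eval w - F w‖ ≤ ‖P.eval w - Q.eval w‖ + ‖Q.eval w - F w‖ :=
        norm_sub_le_norm_sub_add_norm_sub _ _ _
    _ < ε / 2 + ε / 2 := add_lt_add (hPQ w hw) (hQ w hw)
    _ = ε := add_halves ε

theorem exists_ratCoeff_approx_comp_log {c : ℂ} {R : ℝ} {g L : ℂ → ℂ}
    (hg : DifferentiableOn ℂ g (ball c R)) {K : Set ℂ} (hK : IsCompact K) (hKs : K ⊆ ball c R)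
    (hL : ContinuousOn L K) (hexp : ∀ z ∈ K, Complex.exp (L z) = z) {ε : ℝ} (hε : 0 < ε) :
    ∃ P : ℂ[X], RatCoeff P ∧ ∀ z ∈ K, ‖P.eval (L z) - g z‖ < ε := by
  obtain ⟨Q, hQ⟩ := exists_polynomial_approx_of_differentiableOn_ball hg hK hKs (half_pos hε)
  obtain ⟨P, hP, hPQ⟩ := exists_ratCoeff_approx_of_differentiable
    (Q.differentiable.comp Complex.differentiable_exp) (hK.image_of_continuousOn hL) (half_pos hε)
  refine ⟨P, hP, fun z hz => ?_⟩
  have hPQz : ‖P.eval (L z) - Q.eval z‖ < ε / 2 := by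
    simpa [hexp z hz] using hPQ _ (Set.mem_image_of_mem L hz)
  calc ‖P.eval (L z) - g z‖ ≤ ‖P.eval (L z) - Q.eval z‖ + ‖Q.eval z - g z‖ :=
        norm_sub_le_norm_sub_add_norm_sub _ _ _
    _ < ε / 2 + ε / 2 := add_lt_add hPQz (hQ z hz)
    _ = ε := add_halves ε

theorem exists_subset_closedBall_mul_one_sub_one_div {c : ℂ} {R : ℝ} (hR : 0 < R) {K : Set ℂ}
    (hK : IsCompact K) (hKs : K ⊆ ball c R) :
    ∃ m : ℕ, 1 ≤ m ∧ K ⊆ closedBall c (R * (1 - 1 / (m : ℝ))) := by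
  obtain ⟨ρ, hρR, hKρ⟩ := exists_lt_subset_ball hK.isClosed hKs
  obtain ⟨n, hn⟩ := exists_nat_one_div_lt (div_pos (sub_pos.2 hρR) hR)
  refine ⟨n + 1, by omega,
    hKρ.trans (ball_subset_closedBall.trans (closedBall_subset_closedBall ?_))⟩
  rw [lt_div_iff₀ hR] at hn
  push_cast
  nlinarith

theorem A_eq_S_general (z₀ : ℂ) (r : ℝ) (hr : 0 < r)
    (L : ℂ → ℂ) (hL : DifferentiableOn ℂ L (ball z₀ r))
    (hexp : ∀ z ∈ ball z₀ r, Complex.exp (L z) = z) :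
    -- `A = ⋂_{m,j,s} A(m,j,s)`, where membership of `f` in `A(m,j,s)` says that some
    -- `T_n(f)` is within `1/s` of `P_j ∘ log` on `D_m = closedBall z₀ (r(1-1/m))`
    {f : ℂ → ℂ | DifferentiableOn ℂ f (ball z₀ r) ∧
      ∀ m : ℕ, 1 ≤ m → ∀ P : Polynomial ℂ, RatCoeff P → ∀ s : ℕ, 1 ≤ s →
        ∃ n : ℕ, ∀ z ∈ closedBall z₀ (r * (1 - 1 / (m : ℝ))),
          ‖T n f z - P.eval (L z)‖ < 1 / (s : ℝ)} =
    -- `S(D(z₀,r))`: the set of `f` for which `{T_N(f) : N ∈ ℕ}` is dense in `H(D(z₀,r))`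
    {f : ℂ → ℂ | DifferentiableOn ℂ f (ball z₀ r) ∧
      ∀ g : ℂ → ℂ, DifferentiableOn ℂ g (ball z₀ r) →
        ∀ K : Set ℂ, IsCompact K → K ⊆ ball z₀ r → ∀ ε : ℝ, 0 < ε →
          ∃ N : ℕ, ∀ z ∈ K, ‖T N f z - g z‖ < ε} := by
  ext f
  refine ⟨fun ⟨hf, hA⟩ => ⟨hf, fun g hg K hK hKs ε hε => ?_⟩,
    fun ⟨hf, hS⟩ => ⟨hf, fun m hm P _ s hs => ?_⟩⟩
  · obtain ⟨P, hP, hPg⟩ := exists_ratCoeff_approx_comp_log hg hK hKs (hL.continuousOn.mono hKs)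
      (fun z hz => hexp z (hKs hz)) (half_pos hε)
    obtain ⟨m, hm, hKm⟩ := exists_subset_closedBall_mul_one_sub_one_div hr hK hKs
    obtain ⟨s, hs⟩ := exists_nat_one_div_lt (half_pos hε)
    obtain ⟨n, hn⟩ := hA m hm P hP (s + 1) (by omega)
    refine ⟨n, fun z hz => ?_⟩
    have hnz : ‖T n f z - P.eval (L z)‖ < ε / 2 := by
      have := hn z (hKm hz)
      push_cast at this
      exact this.trans hs
    calc ‖T n f z - g z‖ ≤ ‖T n f z - P.eval (L z)‖ + ‖P.eval (L z) - g z‖ :=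
          norm_sub_le_norm_sub_add_norm_sub _ _ _
      _ < ε / 2 + ε / 2 := add_lt_add hnz (hPg z hz)
      _ = ε := add_halves ε
  · have hDm : closedBall z₀ (r * (1 - 1 / (m : ℝ))) ⊆ ball z₀ r :=
      closedBall_subset_ball (mul_lt_of_lt_one_right hr (sub_lt_self 1 (by positivity)))
    exact hS _ (P.differentiable.comp_differentiableOn hL) _ (isCompact_closedBall _ _) hDm _
      (by positivity)

theorem A_eq_S (z₀ : ℂ) (r : ℝ) (hr : 0 < r) (h0 : (0 : ℂ) ∉ ball z₀ r)
    (L : ℂ → ℂ) (hL : DifferentiableOn ℂ L (ball z₀ r))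
    (hexp : ∀ z ∈ ball z₀ r, Complex.exp (L z) = z) :
    -- `A = ⋂_{m,j,s} A(m,j,s)`, where membership of `f` in `A(m,j,s)` says that some
    -- `T_n(f)` is within `1/s` of `P_j ∘ log` on `D_m = closedBall z₀ (r(1-1/m))`
    {f : ℂ → ℂ | DifferentiableOn ℂ f (ball z₀ r) ∧
      ∀ m : ℕ, 1 ≤ m → ∀ P : Polynomial ℂ, RatCoeff P → ∀ s : ℕ, 1 ≤ s →
        ∃ n : ℕ, ∀ z ∈ closedBall z₀ (r * (1 - 1 / (m : ℝ))),
          ‖T n f z - P.eval (L z)‖ < 1 / (s : ℝ)} =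
    -- `S(D(z₀,r))`: the set of `f` for which `{T_N(f) : N ∈ ℕ}` is dense in `H(D(z₀,r))`
    {f : ℂ → ℂ | DifferentiableOn ℂ f (ball z₀ r) ∧
      ∀ g : ℂ → ℂ, DifferentiableOn ℂ g (ball z₀ r) →
        ∀ K : Set ℂ, IsCompact K → K ⊆ ball z₀ r → ∀ ε : ℝ, 0 < ε →
          ∃ N : ℕ, ∀ z ∈ K, ‖T N f z - g z‖ < ε} :=
  A_eq_S_general z₀ r hr L hL hexp
end
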